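/- arXiv:1902.09570 — 4 statements merged into one kernel-verified Lean document; each statement's English description precedes it below -/
import Mathlib

section
/- Let X and Y be finitely supported subsets of an invariant set under finitary permutations of A, with X nonempty. Then: (i) if there exists a finitely supported injection f : X → Y, then there exists a finitely supported surjection f' : Y → X; (ii) if there exists a finitely supported surjection f : Y → X, then the map x ↦ f⁻¹({x}) is a well-defined finitely supported injection from X into ℘_fs(Y). -/
open Pointwise

/-- The group of finitary permutations of the set `A` of atoms: bijections of `A`
whose set of non-fixed points is finite. -/
def FinPerm (A : Type*) : Subgroup (Equiv.Perm A) where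
  carrier := {π : Equiv.Perm A | {a : A | π a ≠ a}.Finite}
  one_mem' := by simp
  mul_mem' := by
    intro π σ hπ hσ
    refine Set.Finite.subset (Set.Finite.union hπ hσ) ?_
    intro a ha
    simp only [Set.mem_setOf_eq, Set.mem_union] at *
    by_contra h
    push_neg at h
    obtain ⟨h1, h2⟩ := h
    exact ha (by rw [Equiv.Perm.mul_apply, h2, h1])
  inv_mem' := by
    intro π hπ
    refine Set.Finite.subset hπ ?_
    intro a ha
    simp only [Set.mem_setOf_eq] at *
    intro h
    exact ha (π.injective (by simp [h]))

/-- An element `x` is finitely supported if some finite set of atoms supports it. -/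
def FinSupp (A : Type*) {X : Type*} [SMul (FinPerm A) X] (x : X) : Prop :=
  ∃ S : Finset A, MulAction.Supports (FinPerm A) (S : Set A) x

/-- The least support of an element: the intersection of all finite sets of atoms
supporting it. -/
def supp (A : Type*) {X : Type*} [SMul (FinPerm A) X] (x : X) : Set A :=
  ⋂₀ {S : Set A | S.Finite ∧ MulAction.Supports (FinPerm A) S x}

/-- A set `S` of atoms supports a function `f` if `f (π • x) = π • f x` for every
finitary permutation `π` fixing `S` pointwise. -/
def SuppFun (A : Type*) {X Y : Type*} [SMul (FinPerm A) X] [SMul (FinPerm A) Y]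
    (S : Set A) (f : X → Y) : Prop :=
  ∀ π : FinPerm A, (∀ a ∈ S, π • a = a) → ∀ x, f (π • x) = π • f x

/-- A set `S` of atoms supports a function `f` between the subsets `X` and `Y` if, for
every finitary permutation `π` fixing `S` pointwise and every `x ∈ X`, we have
`π • x ∈ X`, `π • f x ∈ Y` and `f (π • x) = π • f x`. -/
def SuppFunOn (A : Type*) {U V : Type*} [SMul (FinPerm A) U] [SMul (FinPerm A) V]
    (S : Set A) (X : Set U) (Y : Set V) (f : U → V) : Prop :=
  ∀ π : FinPerm A, (∀ a ∈ S, π • a = a) →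
    ∀ x ∈ X, π • x ∈ X ∧ π • f x ∈ Y ∧ f (π • x) = π • f x

/-- `℘_fs(X)`: the finitely supported subsets of the set `X`. -/
def Pfs (A : Type*) {U : Type*} [SMul (FinPerm A) U] (X : Set U) : Set (Set U) :=
  {Z : Set U | Z ⊆ X ∧ FinSupp A Z}

/-!
For (i), invert the injection on its image and send the rest of `Y` to a chosen point `x₀ ∈ X`.
A permutation fixing the supports of `f`, `Y` and `x₀` maps the image `f '' X` onto itself, so
it commutes with the inverse on the image and fixes the default value: the resulting surjection
is supported by the union of these supports.

For (ii), a permutation fixing a support `S` of `f` maps the fibre over `x` onto the fibre over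
`π • x`. Hence `S` supports the fibre map, and `S` together with a support of `x` supports the
fibre over `x`; surjectivity makes distinct points have disjoint nonempty fibres.
-/

section

open Set

variable {A U V : Type*} [MulAction (FinPerm A) U] [MulAction (FinPerm A) V]

theorem inv_smul_eq_of_forall_smul_eq {S : Set A} {π : FinPerm A}
    (hπ : ∀ a ∈ S, π • a = a) : ∀ a ∈ S, π⁻¹ • a = a :=
  (mem_fixingSubgroup_iff _).mp (inv_mem ((mem_fixingSubgroup_iff _).mpr hπ))

theorem MulAction.Supports.smul_mem {S : Set A} {Y : Set U} (hY : Supports (FinPerm A) S Y)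
    {π : FinPerm A} (hπ : ∀ a ∈ S, π • a = a) {y : U} (hy : y ∈ Y) : π • y ∈ Y :=
  hY π hπ ▸ smul_mem_smul_set hy

open Classical in
noncomputable def retractOn (f : U → V) (X : Set U) (x₀ : U) (y : V) : U :=
  if h : y ∈ f '' X then h.choose else x₀

section retractOn

variable {f : U → V} {X : Set U} {x₀ : U}

theorem retractOn_spec {y : V} (h : y ∈ f '' X) :
    retractOn f X x₀ y ∈ X ∧ f (retractOn f X x₀ y) = y := by
  rw [retractOn, dif_pos h]
  exact h.choose_spec

theorem retractOn_of_notMem {y : V} (h : y ∉ f '' X) : retractOn f X x₀ y = x₀ := by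
  rw [retractOn, dif_neg h]

theorem retractOn_mem (hx₀ : x₀ ∈ X) (y : V) : retractOn f X x₀ y ∈ X := by
  by_cases h : y ∈ f '' X
  · exact (retractOn_spec h).1
  · rwa [retractOn_of_notMem h]

theorem retractOn_apply (hinj : InjOn f X) {x : U} (hx : x ∈ X) : retractOn f X x₀ (f x) = x :=
  have h := retractOn_spec (x₀ := x₀) (mem_image_of_mem f hx)
  hinj h.1 hx h.2

end retractOn

theorem injOn_fiber_of_surjOn {Y : Set U} {X : Set V} {f : U → V} (hsurj : SurjOn f Y X) :
    InjOn (fun x => {y ∈ Y | f y = x}) X := by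
  intro x₁ hx₁ x₂ _ heq
  obtain ⟨y, hy, rfl⟩ := hsurj hx₁
  exact (heq.subset (show y ∈ {y' ∈ Y | f y' = f y} from ⟨hy, rfl⟩)).2

namespace SuppFunOn

variable {S : Set A}

theorem mono {T : Set A} {X : Set U} {Y : Set V} {f : U → V} (hST : S ⊆ T)
    (hf : SuppFunOn A S X Y f) : SuppFunOn A T X Y f :=
  fun π hπ => hf π fun a ha => hπ a (hST ha)

section image

variable {X : Set U} {Y : Set V} {f : U → V} (hf : SuppFunOn A S X Y f)
  {π : FinPerm A} (hπ : ∀ a ∈ S, π • a = a)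
include hf hπ

theorem smul_mem_image {y : V} (hy : y ∈ f '' X) : π • y ∈ f '' X := by
  obtain ⟨x, hx, rfl⟩ := hy
  obtain ⟨hπx, -, hfπx⟩ := hf π hπ x hx
  exact ⟨π • x, hπx, hfπx⟩

theorem smul_mem_image_iff (y : V) : π • y ∈ f '' X ↔ y ∈ f '' X := by
  refine ⟨fun h => ?_, hf.smul_mem_image hπ⟩
  simpa using hf.smul_mem_image (inv_smul_eq_of_forall_smul_eq hπ) h

end image

theorem retractOn_of_injOn {X : Set U} {Y : Set V} {f : U → V} {x₀ : U}
    (hf : SuppFunOn A S X Y f) (hinj : InjOn f X) (hY : MulAction.Supports (FinPerm A) S Y)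
    (hx₀ : x₀ ∈ X) (hx₀S : MulAction.Supports (FinPerm A) S x₀) :
    SuppFunOn A S Y X (retractOn f X x₀) := by
  intro π hπ y hy
  have hequiv : retractOn f X x₀ (π • y) = π • retractOn f X x₀ y := by
    by_cases h : y ∈ f '' X
    · obtain ⟨x, hx, rfl⟩ := h
      obtain ⟨hπx, -, hfπx⟩ := hf π hπ x hx
      rw [retractOn_apply hinj hx, ← hfπx, retractOn_apply hinj hπx]
    · rw [retractOn_of_notMem h, retractOn_of_notMem (mt (hf.smul_mem_image_iff hπ y).1 h),
        hx₀S π hπ]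
  exact ⟨hY.smul_mem hπ hy, hequiv ▸ retractOn_mem hx₀ _, hequiv⟩

section fiber

variable {Y : Set U} {X : Set V} {f : U → V} (hf : SuppFunOn A S Y X f)
include hf

theorem smul_fiber {π : FinPerm A} (hπ : ∀ a ∈ S, π • a = a) (x : V) :
    π • {y ∈ Y | f y = x} = {y ∈ Y | f y = π • x} := by
  ext y
  have hπ' := inv_smul_eq_of_forall_smul_eq hπ
  rw [mem_smul_set_iff_inv_smul_mem]
  constructor
  · rintro ⟨hy, hfy⟩
    obtain ⟨hπy, -, hfπy⟩ := hf π hπ _ hy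
    rw [smul_inv_smul] at hπy hfπy
    exact ⟨hπy, by rw [hfπy, hfy]⟩
  · rintro ⟨hy, hfy⟩
    obtain ⟨hπy, -, hfπy⟩ := hf π⁻¹ hπ' y hy
    exact ⟨hπy, by rw [hfπy, hfy, inv_smul_smul]⟩

end fiber

theorem finSupp_fiber {S : Finset A} {Y : Set U} {X : Set V} {f : U → V}
    (hf : SuppFunOn A (S : Set A) Y X f) {x : V} (hx : FinSupp A x) :
    FinSupp A {y ∈ Y | f y = x} := by
  classical
  obtain ⟨Sx, hSx⟩ := hx
  refine ⟨S ∪ Sx, fun π hπ => ?_⟩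
  rw [hf.smul_fiber (fun a ha => hπ (by simp [ha])), hSx π fun a ha => hπ (by simp [ha])]

theorem fiber_of_surjOn {S : Finset A} {Y : Set U} {X : Set V} {f : U → V}
    (hf : SuppFunOn A (S : Set A) Y X f) (hsurj : SurjOn f Y X)
    (hX : ∀ x ∈ X, FinSupp A x) :
    SuppFunOn A (S : Set A) X (Pfs A Y) (fun x => {y ∈ Y | f y = x}) := by
  intro π hπ x hx
  have hπx : π • x ∈ X := by
    obtain ⟨y, hy, rfl⟩ := hsurj hx
    exact (hf π hπ y hy).2.1
  refine ⟨hπx, ?_, (hf.smul_fiber hπ x).symm⟩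
  rw [hf.smul_fiber hπ x]
  exact ⟨fun y hy => hy.1, hf.finSupp_fiber (hX _ hπx)⟩

end SuppFunOn

end

theorem fsm_inj_surj_transfer_general {A U : Type*} [MulAction (FinPerm A) U]
    (hU : ∀ u : U, FinSupp A u)
    (X Y : Set U) (hY : FinSupp A Y) (hne : X.Nonempty) :
    ((∃ (f : U → U) (S : Finset A), (∀ x ∈ X, f x ∈ Y) ∧ Set.InjOn f X ∧
        SuppFunOn A (S : Set A) X Y f) →
      (∃ (f' : U → U) (S' : Finset A), (∀ y ∈ Y, f' y ∈ X) ∧ (∀ x ∈ X, ∃ y ∈ Y, f' y = x) ∧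
        SuppFunOn A (S' : Set A) Y X f')) ∧
    (∀ (f : U → U) (S : Finset A), (∀ y ∈ Y, f y ∈ X) → (∀ x ∈ X, ∃ y ∈ Y, f y = x) →
      SuppFunOn A (S : Set A) Y X f →
      (∀ x ∈ X, {y ∈ Y | f y = x} ∈ Pfs A Y) ∧
      Set.InjOn (fun x : U => {y ∈ Y | f y = x}) X ∧
      (∃ T : Finset A,
        SuppFunOn A (T : Set A) X (Pfs A Y) (fun x : U => {y ∈ Y | f y = x}))) := by
  refine ⟨?_, fun f S _ hsurj hf =>
    ⟨fun x _ => ⟨fun y hy => hy.1, hf.finSupp_fiber (hU x)⟩, injOn_fiber_of_surjOn hsurj,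
      S, hf.fiber_of_surjOn hsurj fun x _ => hU x⟩⟩
  rintro ⟨f, S, hmaps, hinj, hf⟩
  classical
  obtain ⟨SY, hSY⟩ := hY
  obtain ⟨x₀, hx₀⟩ := hne
  obtain ⟨S₀, hS₀⟩ := hU x₀
  refine ⟨retractOn f X x₀, S ∪ SY ∪ S₀, fun y _ => retractOn_mem hx₀ y,
    fun x hx => ⟨f x, hmaps x hx, retractOn_apply hinj hx⟩, ?_⟩
  push_cast
  exact (hf.mono (by grind)).retractOn_of_injOn hinj (hSY.mono (by grind)) hx₀
    (hS₀.mono (by grind))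

/-- let `X` and `Y` be finitely supported subsets of an invariant set, with
`X` nonempty. Then:
(i) if there is a finitely supported injection `f : X → Y`, then there is a finitely
    supported surjection `f' : Y → X`;
(ii) if there is a finitely supported surjection `f : Y → X`, then `x ↦ f⁻¹({x})` is a
     well-defined finitely supported injection from `X` into `℘_fs(Y)`. -/
theorem fsm_inj_surj_transfer {A U : Type*} [Infinite A] [MulAction (FinPerm A) U]
    (hU : ∀ u : U, FinSupp A u)
    (X Y : Set U) (hX : FinSupp A X) (hY : FinSupp A Y) (hne : X.Nonempty) :
    ((∃ (f : U → U) (S : Finset A), (∀ x ∈ X, f x ∈ Y) ∧ Set.InjOn f X ∧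
        SuppFunOn A (S : Set A) X Y f) →
      (∃ (f' : U → U) (S' : Finset A), (∀ y ∈ Y, f' y ∈ X) ∧ (∀ x ∈ X, ∃ y ∈ Y, f' y = x) ∧
        SuppFunOn A (S' : Set A) Y X f')) ∧
    (∀ (f : U → U) (S : Finset A), (∀ y ∈ Y, f y ∈ X) → (∀ x ∈ X, ∃ y ∈ Y, f y = x) →
      SuppFunOn A (S : Set A) Y X f →
      (∀ x ∈ X, {y ∈ Y | f y = x} ∈ Pfs A Y) ∧
      Set.InjOn (fun x : U => {y ∈ Y | f y = x}) X ∧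
      (∃ T : Finset A,
        SuppFunOn A (T : Set A) X (Pfs A Y) (fun x : U => {y ∈ Y | f y = x}))) :=
  fsm_inj_surj_transfer_general hU X Y hY hne
end

section
/- For every natural number n ≥ 2, there is no finitely supported injection from ℘_n(A), the set of n-element subsets of the set A of atoms with the elementwise action of finitary permutations, into A. -/
open Pointwise

/-!
Let `f` be supported by the finite set `S`. For an `n`-set `X` disjoint from `S`, the atom
`a = f X` is fixed by every finitary permutation fixing `S` pointwise and `X` setwise. If
`a ∉ S`, pick `b ∉ S`, `b ≠ a`, lying in `X` exactly when `a` does; the transposition of `a`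
and `b` is such a permutation and moves `a`. So `f` maps the infinitely many `n`-sets
disjoint from `S` into the finite set `S`, and cannot be injective.
-/

section

variable {A : Type*}

lemma FinPerm.swap_mem [DecidableEq A] (a b : A) : Equiv.swap a b ∈ FinPerm A :=
  (Set.toFinite {a, b}).subset fun x hx => by
    simpa using (Equiv.swap_apply_ne_self_iff.mp hx).2

lemma Equiv.swap_image_eq_self [DecidableEq A] {a b : A} {X : Set A} (h : a ∈ X ↔ b ∈ X) :
    Equiv.swap a b '' X = X := by
  rw [Equiv.image_eq_preimage_symm, Equiv.symm_swap]
  ext x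
  rcases eq_or_ne x a with rfl | hxa
  · simpa using h.symm
  rcases eq_or_ne x b with rfl | hxb
  · simpa using h
  · simp [Equiv.swap_apply_of_ne_of_ne hxa hxb]

lemma Set.infinite_setOf_subset_ncard_eq {T : Set A} (hT : T.Infinite) {n : ℕ} (hn : n ≠ 0) :
    {X : Set A | X ⊆ T ∧ X.ncard = n}.Infinite := by
  obtain ⟨B, hBT, hBfin, hB⟩ := hT.exists_subset_ncard_eq (n - 1)
  refine Set.infinite_of_injOn_mapsTo (f := fun a => insert a B) ?_ ?_ (hT.sdiff hBfin)
  · intro a ha a' ha' h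
    exact (Set.insert_inj ha.2).mp h
  · intro a ha
    refine ⟨Set.insert_subset ha.1 hBT, ?_⟩
    rw [Set.ncard_insert_of_notMem ha.2 hBfin, hB]
    omega

lemma exists_ne_notMem_mem_iff_mem [Infinite A] {S X : Set A} (hS : S.Finite)
    (hXS : Disjoint X S) (hX : 1 < X.ncard) (a : A) :
    ∃ b, b ≠ a ∧ b ∉ S ∧ (b ∈ X ↔ a ∈ X) := by
  by_cases haX : a ∈ X
  · obtain ⟨b, hbX, hba⟩ := Set.exists_ne_of_one_lt_ncard hX a
    exact ⟨b, hba, hXS.notMem_of_mem_left hbX, by simp [hbX, haX]⟩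
  · have hfin : (insert a (X ∪ S)).Finite :=
      ((Set.finite_of_ncard_pos (by omega)).union hS).insert a
    obtain ⟨b, hb⟩ := hfin.infinite_compl.nonempty
    simp only [Set.mem_compl_iff, Set.mem_insert_iff, Set.mem_union, not_or] at hb
    exact ⟨b, hb.1, hb.2.2, by simp [hb.2.1, haX]⟩

lemma mem_of_forall_smul_eq_self [Infinite A] {S X : Set A} (hS : S.Finite)
    (hXS : Disjoint X S) (hX : 1 < X.ncard) {a : A}
    (ha : ∀ π : FinPerm A, (∀ s ∈ S, π • s = s) → π • X = X → π • a = a) : a ∈ S := by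
  classical
  by_contra haS
  obtain ⟨b, hba, hbS, hbX⟩ := exists_ne_notMem_mem_iff_mem hS hXS hX a
  have hfix : Equiv.swap a b a = a := by
    refine ha ⟨_, FinPerm.swap_mem a b⟩ (fun s hs => ?_) (Equiv.swap_image_eq_self hbX.symm)
    exact Equiv.swap_apply_of_ne_of_ne (ne_of_mem_of_not_mem hs haS) (ne_of_mem_of_not_mem hs hbS)
  exact hba (by simpa using hfix)
end

/-- for every `n ≥ 2` there is no finitely supported injection from
`℘_n(A)`, the set of `n`-element subsets of the set of atoms (with the elementwise
action), into `A`. -/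
theorem no_finSupp_injection_nSubsets_to_atoms {A : Type*} [Infinite A]
    (n : ℕ) (hn : 2 ≤ n) :
    ¬ ∃ (f : Set A → A) (S : Finset A),
      Set.InjOn f {X : Set A | X.ncard = n} ∧
      (∀ π : FinPerm A, (∀ a ∈ (S : Set A), π • a = a) →
        ∀ X : Set A, X.ncard = n → (π • X).ncard = n ∧ f (π • X) = π • f X) := by
  rintro ⟨f, S, hinj, hsupp⟩
  have hmaps : Set.MapsTo f {X | X ⊆ (↑S)ᶜ ∧ X.ncard = n} S := by
    rintro X ⟨hXS, hX⟩
    refine mem_of_forall_smul_eq_self S.finite_toSet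
      (Set.subset_compl_iff_disjoint_right.mp hXS) (by omega) fun π hπ hπX => ?_
    simpa [hπX] using ((hsupp π hπ X hX).2).symm
  have hinf : {X : Set A | X ⊆ (↑S)ᶜ ∧ X.ncard = n}.Infinite :=
    Set.infinite_setOf_subset_ncard_eq S.finite_toSet.infinite_compl (by omega)
  obtain ⟨X, hX, Y, hY, hXY, hfXY⟩ := hinf.exists_ne_map_eq_of_mapsTo hmaps S.finite_toSet
  exact hXY (hinj hX.2 hY.2 hfXY)
end

section
/- Every finitely supported injection f : ℘_fs(A) → ℘_fs(A) is surjective, where ℘_fs(A) is the set of finitely supported (i.e. finite or cofinite) subsets of the set A of atoms with the elementwise action of finitary permutations; in particular there is no finitely supported bijection from ℘_fs(A) onto a finitely supported proper subset of ℘_fs(A), and hence no finitely supported bijection between ℘_fin(A) and ℘_fs(A). -/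
open Pointwise

theorem Equiv.swap_mem_finPerm {A : Type*} [DecidableEq A] (a b : A) :
    Equiv.swap a b ∈ FinPerm A :=
  ((Set.finite_singleton b).insert a).subset fun _ hx =>
    (Equiv.swap_apply_ne_self_iff.mp hx).2

theorem MulAction.Supports.apply_of_equivariant {G α β γ : Type*} [SMul G α] [SMul G β]
    [SMul G γ] {s : Set α} {f : β → γ} {x : β}
    (hf : ∀ g : G, (∀ a ∈ s, g • a = a) → f (g • x) = g • f x)
    (hx : MulAction.Supports G s x) : MulAction.Supports G s (f x) :=
  fun g hg => by rw [← hf g fun a ha => hg ha, hx g hg]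

namespace FinPerm

variable {A : Type*}

theorem smul_set_eq_self_of_subset {T X : Set A} (hX : X ⊆ T) {π : FinPerm A}
    (hπ : ∀ ⦃a⦄, a ∈ T → π • a = a) : π • X = X := by
  ext x
  constructor
  · rintro ⟨y, hy, rfl⟩
    show π • y ∈ X
    rwa [hπ (hX hy)]
  · intro hx
    exact ⟨x, hx, hπ (hX hx)⟩

/-- A transposition of a point of `X \ T` with a point of `Xᶜ \ T` fixes `T` pointwise but
moves `X`. -/
theorem supports_set_iff (T X : Set A) :
    MulAction.Supports (FinPerm A) T X ↔ X ⊆ T ∨ Xᶜ ⊆ T := by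
  classical
  constructor
  · intro hX
    by_contra! hout
    obtain ⟨a, haX, haT⟩ := Set.not_subset.mp hout.1
    obtain ⟨b, hbX, hbT⟩ := Set.not_subset.mp hout.2
    let π : FinPerm A := ⟨Equiv.swap a b, Equiv.swap_mem_finPerm a b⟩
    have hπT : ∀ ⦃c⦄, c ∈ T → π • c = c := fun c hc =>
      Equiv.swap_apply_of_ne_of_ne (ne_of_mem_of_not_mem hc haT)
        (ne_of_mem_of_not_mem hc hbT)
    have hπa : π • a ∈ π • X := Set.smul_mem_smul_set haX
    rw [hX π hπT] at hπa
    exact hbX (by simpa [π] using hπa)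
  · rintro (hX | hX) π hπ
    · exact smul_set_eq_self_of_subset hX hπ
    · rw [← compl_inj_iff, ← Set.smul_set_compl]
      exact smul_set_eq_self_of_subset hX hπ

theorem finite_setOf_supports {T : Set A} (hT : T.Finite) :
    {X : Set A | MulAction.Supports (FinPerm A) T X}.Finite := by
  refine (hT.finite_subsets.union (hT.finite_subsets.image compl)).subset ?_
  intro X hX
  rcases (supports_set_iff T X).mp hX with hX | hX
  · exact Or.inl hX
  · exact Or.inr ⟨Xᶜ, hX, compl_compl X⟩

theorem finSupp_univ : FinSupp A (Set.univ : Set A) :=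
  ⟨∅, fun _ _ => Set.smul_set_univ⟩

/-- The sets supported by a finite `T ⊇ S` form a finite set that an `S`-equivariant `f`
maps into itself, so there injectivity of `f` yields surjectivity. -/
theorem surjOn_finSupp_of_injOn {f : Set A → Set A} {S : Finset A}
    (hinj : Set.InjOn f {X : Set A | FinSupp A X})
    (hequiv : ∀ π : FinPerm A, (∀ a ∈ (S : Set A), π • a = a) →
      ∀ X : Set A, FinSupp A X → f (π • X) = π • f X) :
    Set.SurjOn f {X : Set A | FinSupp A X} {X : Set A | FinSupp A X} := by
  classical
  rintro Y ⟨T₀, hY⟩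
  set T : Finset A := T₀ ∪ S
  set B := {X : Set A | MulAction.Supports (FinPerm A) (T : Set A) X}
  have hB : B ⊆ {X : Set A | FinSupp A X} := fun X hX => ⟨T, hX⟩
  have hmaps : Set.MapsTo f B B := fun X hX =>
    MulAction.Supports.apply_of_equivariant
      (fun π hπ => hequiv π (fun a ha => hπ a (Finset.mem_union_right _ ha)) X (hB hX)) hX
  have hYB : Y ∈ B := hY.mono (by simp [T])
  obtain ⟨X, hXB, rfl⟩ :=
    ((finite_setOf_supports T.finite_toSet).injOn_iff_bijOn_of_mapsTo hmaps).mp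
      (hinj.mono hB) |>.surjOn hYB
  exact ⟨X, hB hXB, rfl⟩

end FinPerm

/-- every finitely supported injection `f : ℘_fs(A) → ℘_fs(A)` is
surjective; in particular there is no finitely supported bijection from `℘_fs(A)` onto a
finitely supported proper subset of `℘_fs(A)`, and hence no finitely supported bijection
between `℘_fin(A)` and `℘_fs(A)`. -/
theorem finSupp_injection_pfsAtoms_surjective {A : Type*} [Infinite A] :
    (∀ (f : Set A → Set A) (S : Finset A),
      (∀ X : Set A, FinSupp A X → FinSupp A (f X)) →
      Set.InjOn f {X : Set A | FinSupp A X} →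
      (∀ π : FinPerm A, (∀ a ∈ (S : Set A), π • a = a) →
        ∀ X : Set A, FinSupp A X → f (π • X) = π • f X) →
      ∀ Y : Set A, FinSupp A Y → ∃ X : Set A, FinSupp A X ∧ f X = Y) ∧
    (¬ ∃ (T : Set (Set A)) (f : Set A → Set A) (S : Finset A),
      T ⊆ {X : Set A | FinSupp A X} ∧ T ≠ {X : Set A | FinSupp A X} ∧ FinSupp A T ∧
      (∀ X : Set A, FinSupp A X → f X ∈ T) ∧
      Set.InjOn f {X : Set A | FinSupp A X} ∧
      (∀ Y ∈ T, ∃ X : Set A, FinSupp A X ∧ f X = Y) ∧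
      (∀ π : FinPerm A, (∀ a ∈ (S : Set A), π • a = a) →
        ∀ X : Set A, FinSupp A X → f (π • X) = π • f X)) ∧
    (¬ ∃ (f : Set A → Set A) (S : Finset A),
      (∀ X : Set A, FinSupp A X → (f X).Finite) ∧
      Set.InjOn f {X : Set A | FinSupp A X} ∧
      (∀ Y : Set A, Y.Finite → ∃ X : Set A, FinSupp A X ∧ f X = Y) ∧
      (∀ π : FinPerm A, (∀ a ∈ (S : Set A), π • a = a) →
        ∀ X : Set A, FinSupp A X → f (π • X) = π • f X)) := by
  refine ⟨fun f S _ hinj hequiv => FinPerm.surjOn_finSupp_of_injOn hinj hequiv, ?_, ?_⟩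
  · rintro ⟨T, f, S, hTsub, hTne, -, hmem, hinj, -, hequiv⟩
    refine hTne (hTsub.antisymm fun Y hY => ?_)
    obtain ⟨X, hX, rfl⟩ := FinPerm.surjOn_finSupp_of_injOn hinj hequiv hY
    exact hmem X hX
  · rintro ⟨f, S, hfin, hinj, -, hequiv⟩
    obtain ⟨X, hX, hfX⟩ := FinPerm.surjOn_finSupp_of_injOn hinj hequiv FinPerm.finSupp_univ
    exact Set.infinite_univ (hfX ▸ hfin X hX)
end

section
/- Let X be a finitely supported subset of an invariant set under finitary permutations of A, and suppose X contains no infinite uniformly supported subset (no infinite subset all of whose elements are supported by one common finite set of atoms). Then ℘_fin(X), the set of finite subsets of X with the elementwise action, also contains no infinite uniformly supported subset. -/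
open Pointwise

/-! If `S` supports a finite set `Z` and `z ∈ Z`, then every finitary permutation fixing `S`
pointwise permutes `Z`, so the orbit of `z` under such permutations is finite. For an atom
`a ∉ S` the elements `swap a c • z`, with `c` fresh, therefore repeat; a repetition
`swap a c • z = swap a d • z` together with `swap c d • z = z` shows that `swap a d` fixes `z`,
because `swap a d = swap c d * swap a d * swap a c`. Chaining such swaps, every swap
of two atoms outside `S` fixes `z`; since these swaps generate the finitary permutations
fixing `S`, the set `S` supports `z`. Hence the union of an infinite family of finite,
`S`-supported subsets of `X` is an infinite subset of `X` uniformly supported by `S`. -/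

open Equiv MulAction

lemma Equiv.swap_mul_swap_mul_swap_of_ne {A : Type*} [DecidableEq A] {a c d : A}
    (hac : a ≠ c) (had : a ≠ d) (hcd : c ≠ d) :
    swap c d * swap a d * swap a c = swap a d := by
  ext x
  simp only [Perm.mul_apply, swap_apply_def]
  split_ifs <;> simp_all

namespace FinPerm

variable {A U : Type*} [MulAction (FinPerm A) U]

/-- The stabilizer of `x`, viewed inside `Perm A`, where Mathlib's results on swaps live. -/
def permStabilizer (x : U) : Subgroup (Perm A) :=
  (stabilizer (FinPerm A) x).map (FinPerm A).subtype

lemma coe_mem_permStabilizer {σ : FinPerm A} {x : U} :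
    (σ : Perm A) ∈ permStabilizer x ↔ σ • x = x := by
  simp [permStabilizer, Subgroup.mem_map]

section Swap

variable [DecidableEq A]

def swap (a b : A) : FinPerm A := ⟨Equiv.swap a b, finite_compl_fixedBy_swap⟩

lemma swap_mem_permStabilizer {a b : A} {x : U} :
    Equiv.swap a b ∈ permStabilizer x ↔ swap a b • x = x :=
  coe_mem_permStabilizer (σ := swap a b)

lemma supports_iff_swap_mem_permStabilizer {S : Set A} {x : U} :
    Supports (FinPerm A) S x ↔ ∀ a ∉ S, ∀ b ∉ S, Equiv.swap a b ∈ permStabilizer x := by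
  constructor
  · intro hx a ha b hb
    refine swap_mem_permStabilizer.2 (hx _ fun c hc => ?_)
    exact swap_apply_of_ne_of_ne (ne_of_mem_of_not_mem hc ha) (ne_of_mem_of_not_mem hc hb)
  · intro hswap π hπ
    set swaps : Set (Perm A) := {σ | ∃ a ∉ S, ∃ b ∉ S, a ≠ b ∧ σ = Equiv.swap a b}
    have hswaps : ∀ σ ∈ swaps, σ.IsSwap := fun σ ⟨a, _, b, _, hab, hσ⟩ => ⟨a, b, hab, hσ⟩
    have hle : Subgroup.closure swaps ≤ permStabilizer x :=
      (Subgroup.closure_le _).2 fun σ ⟨a, ha, b, hb, _, hσ⟩ => hσ ▸ hswap a ha b hb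
    refine coe_mem_permStabilizer.1 (hle ((mem_closure_isSwap hswaps).2 ⟨π.2, fun c => ?_⟩))
    by_cases hc : (π : Perm A) c = c
    · rw [hc]
      exact mem_orbit_self c
    have hcS : c ∉ S := fun h => hc (hπ h)
    have hπcS : (π : Perm A) c ∉ S := fun h => hc ((π : Perm A).injective (hπ h))
    exact ⟨⟨_, Subgroup.subset_closure ⟨_, hπcS, c, hcS, hc, rfl⟩⟩, swap_apply_right _ _⟩

lemma exists_swap_mem_permStabilizer [Infinite A] {S T : Set A} (hS : S.Finite)
    (hT : T.Finite) {Z : Set U} (hZ : Z.Finite) (hSZ : Supports (FinPerm A) S Z) {z : U}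
    (hz : z ∈ Z) (hTz : Supports (FinPerm A) T z) {a : A} (ha : a ∉ S) :
    ∃ d ∉ T, Equiv.swap a d ∈ permStabilizer z := by
  have hfresh : (S ∪ T ∪ {a})ᶜ.Infinite :=
    ((hS.union hT).union (Set.finite_singleton a)).infinite_compl
  have hmaps : Set.MapsTo (fun c => swap a c • z) (S ∪ T ∪ {a})ᶜ Z := by
    intro c hc
    simp only [Set.union_singleton, Set.mem_compl_iff, Set.mem_insert_iff, Set.mem_union,
      not_or] at hc
    rw [← swap_mem_permStabilizer.1 (supports_iff_swap_mem_permStabilizer.1 hSZ a ha c hc.2.1)]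
    exact Set.smul_mem_smul_set hz
  obtain ⟨c, hc, d, hd, hcd, heq⟩ := hfresh.exists_ne_map_eq_of_mapsTo hmaps hZ
  simp only [Set.union_singleton, Set.mem_compl_iff, Set.mem_insert_iff, Set.mem_union,
    not_or] at hc hd
  refine ⟨d, hd.2.2, ?_⟩
  have hdc : (Equiv.swap a d)⁻¹ * Equiv.swap a c ∈ permStabilizer z :=
    coe_mem_permStabilizer (σ := (swap a d)⁻¹ * swap a c) |>.2 <| by
      rw [mul_smul, inv_smul_eq_iff]
      exact heq
  rw [swap_inv] at hdc
  have hcd' : Equiv.swap c d ∈ permStabilizer z :=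
    supports_iff_swap_mem_permStabilizer.1 hTz c hc.2.2 d hd.2.2
  rw [← swap_mul_swap_mul_swap_of_ne (Ne.symm hc.1) (Ne.symm hd.1) hcd, mul_assoc]
  exact mul_mem hcd' hdc

end Swap

lemma supports_of_mem_of_finite [Infinite A] {S : Set A} (hS : S.Finite) {Z : Set U}
    (hZ : Z.Finite) (hSZ : Supports (FinPerm A) S Z) {z : U} (hz : z ∈ Z) (hz_fin : FinSupp A z) :
    Supports (FinPerm A) S z := by
  classical
  obtain ⟨T, hTz⟩ := hz_fin
  have hT := supports_iff_swap_mem_permStabilizer.1 hTz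
  have hST : ∀ a ∉ S, ∀ b ∉ (T : Set A), Equiv.swap a b ∈ permStabilizer z := by
    intro a ha b hb
    obtain ⟨d, hd, had⟩ := exists_swap_mem_permStabilizer hS T.finite_toSet hZ hSZ hz hTz ha
    exact SubmonoidClass.swap_mem_trans _ had (hT d hd b hb)
  refine supports_iff_swap_mem_permStabilizer.2 fun a ha b hb => ?_
  obtain ⟨c, hc⟩ := T.finite_toSet.infinite_compl.nonempty
  exact SubmonoidClass.swap_mem_trans _ (hST a ha c hc) (swap_comm c b ▸ hST b hb c hc)

end FinPerm

theorem finPowerset_no_infinite_uniformly_supported_general {A U : Type*} [Infinite A]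
    [MulAction (FinPerm A) U] (hU : ∀ u : U, FinSupp A u)
    (X : Set U)
    (h : ¬ ∃ Z : Set U, Z ⊆ X ∧ Z.Infinite ∧
      ∃ S : Finset A, ∀ z ∈ Z, MulAction.Supports (FinPerm A) (S : Set A) z) :
    ¬ ∃ F : Set (Set U), (∀ Z ∈ F, Z ⊆ X ∧ Z.Finite) ∧ F.Infinite ∧
      ∃ S : Finset A, ∀ Z ∈ F, MulAction.Supports (FinPerm A) (S : Set A) Z := by
  rintro ⟨F, hF, hF_inf, S, hFS⟩
  refine h ⟨⋃₀ F, Set.sUnion_subset fun Z hZ => (hF Z hZ).1, fun hfin => ?_, S, ?_⟩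
  · exact hF_inf (hfin.finite_subsets.subset fun Z => Set.subset_sUnion_of_mem)
  · rintro z ⟨Z, hZF, hzZ⟩
    exact FinPerm.supports_of_mem_of_finite S.finite_toSet (hF Z hZF).2 (hFS Z hZF) hzZ (hU z)

/-- if a finitely supported subset `X` of an invariant set contains no
infinite uniformly supported subset, then `℘_fin(X)`, the set of finite subsets of `X`
(with the elementwise action), contains no infinite uniformly supported subset either. -/
theorem finPowerset_no_infinite_uniformly_supported {A U : Type*} [Infinite A]
    [MulAction (FinPerm A) U] (hU : ∀ u : U, FinSupp A u)
    (X : Set U) (hX : FinSupp A X)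
    (h : ¬ ∃ Z : Set U, Z ⊆ X ∧ Z.Infinite ∧
      ∃ S : Finset A, ∀ z ∈ Z, MulAction.Supports (FinPerm A) (S : Set A) z) :
    ¬ ∃ F : Set (Set U), (∀ Z ∈ F, Z ⊆ X ∧ Z.Finite) ∧ F.Infinite ∧
      ∃ S : Finset A, ∀ Z ∈ F, MulAction.Supports (FinPerm A) (S : Set A) Z :=
  finPowerset_no_infinite_uniformly_supported_general hU X h
end
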